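/- arXiv:1505.04163 — 5 statements merged into one kernel-verified Lean document; each statement's English description precedes it below -/
import Mathlib

section
/- There exists a 10×10 integer matrix S with |det S| = 18 such that Sᵀ · G(U⊕E_8) · S = G(A_8) ⊕ G(A_1) ⊕ ⟨18⟩. In other words, the lattice A_8 ⊕ A_1 ⊕ ⟨18⟩ embeds as a sublattice of index 18 in the even unimodular lattice U ⊕ E_8 of signature (1,9); i.e., A_8 ⊕ A_1 and a vector h of square 18 glue to U ⊕ E_8. -/
/-- The Gram matrix of the negative-definite root lattice `Aₙ` (0-based indexing:
`i : Fin n` is the vertex `a_{i+1}`): diagonal entries `-2`, entries `1` at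
adjacent positions, `0` elsewhere. -/
def gramA (n : ℕ) : Matrix (Fin n) (Fin n) ℤ :=
  Matrix.of fun i j =>
    if i = j then -2
    else if i.val + 1 = j.val ∨ j.val + 1 = i.val then 1
    else 0

/-- The Gram matrix of the negative-definite root lattice `D_k` (0-based indexing:
`i : Fin k` is the vertex `d_{i+1}`): diagonal entries `-2`, entries `1` at the
edges `{i, i+1}` (1-based, `1 ≤ i ≤ k-2`) and `{k-2, k}` (1-based), `0` elsewhere. -/
def gramD (k : ℕ) : Matrix (Fin k) (Fin k) ℤ :=
  Matrix.of fun i j =>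
    if i = j then -2
    else if (i.val + 1 = j.val ∧ j.val + 1 ≤ k - 1) ∨ (j.val + 1 = i.val ∧ i.val + 1 ≤ k - 1) ∨
        (i.val = k - 3 ∧ j.val = k - 1) ∨ (j.val = k - 3 ∧ i.val = k - 1) then 1
    else 0

/-- The Gram matrix of the negative-definite root lattice `E_l`, `l ∈ {6,7,8}`
(0-based indexing: `i : Fin l` is the vertex `e_{i+1}`): diagonal entries `-2`,
entries `1` at the edges `{i, i+1}` (1-based, `2 ≤ i ≤ l-1`) and `{1, 4}`
(1-based), `0` elsewhere. -/
def gramE (l : ℕ) : Matrix (Fin l) (Fin l) ℤ :=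
  Matrix.of fun i j =>
    if i = j then -2
    else if (i.val + 1 = j.val ∧ 1 ≤ i.val) ∨ (j.val + 1 = i.val ∧ 1 ≤ j.val) ∨
        (i.val = 0 ∧ j.val = 3) ∨ (j.val = 0 ∧ i.val = 3) then 1
    else 0

/-- Block-diagonal (orthogonal) sum of two Gram matrices. -/
def blockSum {m n : ℕ} (A : Matrix (Fin m) (Fin m) ℤ) (B : Matrix (Fin n) (Fin n) ℤ) :
    Matrix (Fin (m + n)) (Fin (m + n)) ℤ :=
  Matrix.reindex finSumFinEquiv finSumFinEquiv (Matrix.fromBlocks A 0 0 B)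

/-- The Gram matrix of the hyperbolic plane `U`. -/
def gramU : Matrix (Fin 2) (Fin 2) ℤ := !![0, 1; 1, 0]

/-- The Gram matrix of the even unimodular lattice `U ⊕ E₈` of signature `(1,9)`. -/
def gramUE8 : Matrix (Fin 10) (Fin 10) ℤ := blockSum gramU (gramE 8)

/-- The basis-change matrix: its first eight columns span a copy of `A₈` inside `E₈`
(the simple roots `e₂,…,e₈` together with the lowest root of `E₈`), its ninth column
is a root of `U`, and its last column is a vector of square `18` in `U`. -/
def glueS8 : Matrix (Fin 10) (Fin 10) ℤ :=
  !![0, 0, 0, 0, 0, 0, 0, 0, 1, 3;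
     0, 0, 0, 0, 0, 0, 0, 0, -1, 3;
     0, 0, 0, 0, 0, 0, 0, -3, 0, 0;
     1, 0, 0, 0, 0, 0, 0, -2, 0, 0;
     0, 1, 0, 0, 0, 0, 0, -4, 0, 0;
     0, 0, 1, 0, 0, 0, 0, -6, 0, 0;
     0, 0, 0, 1, 0, 0, 0, -5, 0, 0;
     0, 0, 0, 0, 1, 0, 0, -4, 0, 0;
     0, 0, 0, 0, 0, 1, 0, -3, 0, 0;
     0, 0, 0, 0, 0, 0, 1, -2, 0, 0]

/-- An even permutation of the rows of `glueS8` bringing it to block-triangular form. -/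
def permS8 : Equiv.Perm (Fin 10) :=
  (Equiv.swap 0 3 * Equiv.swap 3 6 * Equiv.swap 6 9) *
  (Equiv.swap 1 4 * Equiv.swap 4 7 * Equiv.swap 7 2 * Equiv.swap 2 5 * Equiv.swap 5 8)

def Cblk : Matrix (Fin 7) (Fin 3) ℤ :=
  !![-2,0,0; -4,0,0; -6,0,0; -5,0,0; -4,0,0; -3,0,0; -2,0,0]

def Dblk : Matrix (Fin 3) (Fin 3) ℤ := !![-3,0,0; 0,-1,3; 0,1,3]

theorem det_one_fromBlocks (m n : ℕ) (C : Matrix (Fin m) (Fin n) ℤ) (D : Matrix (Fin n) (Fin n) ℤ) :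
    (Matrix.fromBlocks (1 : Matrix (Fin m) (Fin m) ℤ) C 0 D).det = D.det := by
  rw [Matrix.det_fromBlocks_zero₂₁, Matrix.det_one, one_mul]

set_option maxRecDepth 4000 in
lemma glueS8_det : glueS8.det = 18 := by
  have he : glueS8.submatrix (⇑permS8) id =
      Matrix.reindex finSumFinEquiv finSumFinEquiv
        (Matrix.fromBlocks (1 : Matrix (Fin 7) (Fin 7) ℤ) Cblk 0 Dblk) := by
    decide
  have hD : Dblk.det = 18 := by decide
  have key : (glueS8.submatrix (⇑permS8) id).det = 18 := by
    rw [he, Matrix.det_reindex_self, det_one_fromBlocks 7 3, hD]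
  have hs : Equiv.Perm.sign permS8 = 1 := by
    simp [permS8, Equiv.Perm.sign_swap]
  have h := Matrix.det_permute permS8 glueS8
  rw [key, hs] at h
  norm_num at h
  exact h.symm

set_option maxHeartbeats 1000000 in
lemma glueS8_gram :
    glueS8.transpose * gramUE8 * glueS8 = blockSum (blockSum (gramA 8) (gramA 1)) !![(18 : ℤ)] := by
  decide

/-- The lattice `A₈ ⊕ A₁ ⊕ ⟨18⟩` embeds with index `18` into `U ⊕ E₈`: `A₈ ⊕ A₁` and a vector of square `18` glue to `U ⊕ E₈`. -/
theorem glue_8 :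
    ∃ S : Matrix (Fin 10) (Fin 10) ℤ,
      |S.det| = 18 ∧ S.transpose * gramUE8 * S = blockSum (blockSum (gramA 8) (gramA 1)) !![(18 : ℤ)] := by
  exact ⟨glueS8, by rw [glueS8_det]; norm_num, glueS8_gram⟩
end

section
/- There exists a 10×10 integer matrix S with |det S| = 6 such that Sᵀ · G(U⊕E_8) · S = G(E_7) ⊕ G(A_2) ⊕ ⟨6⟩. In other words, the lattice E_7 ⊕ A_2 ⊕ ⟨6⟩ embeds as a sublattice of index 6 in the even unimodular lattice U ⊕ E_8 of signature (1,9); i.e., E_7 ⊕ A_2 and a vector h of square 6 glue to U ⊕ E_8. -/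
/-!
Write `u₁, u₂` for the basis of `U` and `e₁, …, e₈` for the simple roots of `E₈`, and let
`θ = 3e₁ + 2e₂ + 4e₃ + 6e₄ + 5e₅ + 4e₆ + 3e₇ + 2e₈` be the highest root of `E₈`. Then `θ` is
orthogonal to `e₁, …, e₇`, which span `E₇`; the roots `u₁ - u₂` and `u₂ + θ` span an `A₂`
orthogonal to `E₇`; and `h = 2u₁ + 2u₂ + θ` has square `8 - 2 = 6` and is orthogonal to both.
These ten vectors, in coordinates `(u₁, u₂, e₁, …, e₈)`, are the columns of `glueMatrix`.
-/

open Matrix Equiv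

theorem Matrix.sign_mul_det_eq_prod_of_submatrix_eq_mul {m R : Type*} [Fintype m]
    [DecidableEq m] [LinearOrder m] [CommRing R] {A L U : Matrix m m R} (σ : Perm m)
    (h : A.submatrix σ id = L * U) (hL : L.IsLowerTriangular) (hU : U.IsUpperTriangular) :
    Perm.sign σ * A.det = ∏ i, L i i * U i i := by
  rw [← det_permute, h, det_mul, det_of_isLowerTriangular L hL, det_of_isUpperTriangular hU,
    Finset.prod_mul_distrib]

def glueMatrix : Matrix (Fin 10) (Fin 10) ℤ :=
  !![0, 0, 0, 0, 0, 0, 0,  1, 0, 2;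
     0, 0, 0, 0, 0, 0, 0, -1, 1, 2;
     1, 0, 0, 0, 0, 0, 0,  0, 3, 3;
     0, 1, 0, 0, 0, 0, 0,  0, 2, 2;
     0, 0, 1, 0, 0, 0, 0,  0, 4, 4;
     0, 0, 0, 1, 0, 0, 0,  0, 6, 6;
     0, 0, 0, 0, 1, 0, 0,  0, 5, 5;
     0, 0, 0, 0, 0, 1, 0,  0, 4, 4;
     0, 0, 0, 0, 0, 0, 1,  0, 3, 3;
     0, 0, 0, 0, 0, 0, 0,  0, 2, 2]

theorem transpose_glueMatrix_mul_gramUE8_mul_glueMatrix :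
    glueMatrixᵀ * gramUE8 * glueMatrix =
      blockSum (blockSum (gramE 7) (gramA 2)) !![(6 : ℤ)] := by
  decide +kernel

def glueRowPerm : Perm (Fin 10) where
  toFun := ![2, 3, 4, 5, 6, 7, 8, 0, 1, 9]
  invFun := ![7, 8, 0, 1, 2, 3, 4, 5, 6, 9]
  left_inv := by decide
  right_inv := by decide

def glueLower : Matrix (Fin 10) (Fin 10) ℤ :=
  !![1, 0, 0, 0, 0, 0, 0,  0, 0, 0;
     0, 1, 0, 0, 0, 0, 0,  0, 0, 0;
     0, 0, 1, 0, 0, 0, 0,  0, 0, 0;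
     0, 0, 0, 1, 0, 0, 0,  0, 0, 0;
     0, 0, 0, 0, 1, 0, 0,  0, 0, 0;
     0, 0, 0, 0, 0, 1, 0,  0, 0, 0;
     0, 0, 0, 0, 0, 0, 1,  0, 0, 0;
     0, 0, 0, 0, 0, 0, 0,  1, 0, 0;
     0, 0, 0, 0, 0, 0, 0, -1, 1, 0;
     0, 0, 0, 0, 0, 0, 0,  0, 2, 1]

def glueUpper : Matrix (Fin 10) (Fin 10) ℤ :=
  !![1, 0, 0, 0, 0, 0, 0, 0, 3,  3;
     0, 1, 0, 0, 0, 0, 0, 0, 2,  2;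
     0, 0, 1, 0, 0, 0, 0, 0, 4,  4;
     0, 0, 0, 1, 0, 0, 0, 0, 6,  6;
     0, 0, 0, 0, 1, 0, 0, 0, 5,  5;
     0, 0, 0, 0, 0, 1, 0, 0, 4,  4;
     0, 0, 0, 0, 0, 0, 1, 0, 3,  3;
     0, 0, 0, 0, 0, 0, 0, 1, 0,  2;
     0, 0, 0, 0, 0, 0, 0, 0, 1,  4;
     0, 0, 0, 0, 0, 0, 0, 0, 0, -6]

theorem glueMatrix_submatrix_glueRowPerm :
    glueMatrix.submatrix glueRowPerm id = glueLower * glueUpper := by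
  decide

set_option maxRecDepth 10000 in
theorem det_glueMatrix : glueMatrix.det = -6 := by
  have hsign : Perm.sign glueRowPerm = 1 := by decide
  have hdiag : ∏ i, glueLower i i * glueUpper i i = -6 := by decide
  have h := sign_mul_det_eq_prod_of_submatrix_eq_mul glueRowPerm
    glueMatrix_submatrix_glueRowPerm (by decide) (by decide)
  simpa [hsign, hdiag] using h

/-- The lattice `E₇ ⊕ A₂ ⊕ ⟨6⟩` embeds with index `6` into `U ⊕ E₈`: `E₇ ⊕ A₂` and a vector of square `6` glue to `U ⊕ E₈`. -/
theorem glue_10 :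
    ∃ S : Matrix (Fin 10) (Fin 10) ℤ,
      |S.det| = 6 ∧ S.transpose * gramUE8 * S = blockSum (blockSum (gramE 7) (gramA 2)) !![(6 : ℤ)] :=
  ⟨glueMatrix, by rw [det_glueMatrix]; rfl, transpose_glueMatrix_mul_gramUE8_mul_glueMatrix⟩
end

section
/- There exists a 10×10 integer matrix S with |det S| = 42 such that Sᵀ · G(U⊕E_8) · S = G(A_6) ⊕ G(A_2) ⊕ G(A_1) ⊕ ⟨42⟩. In other words, the lattice A_6 ⊕ A_2 ⊕ A_1 ⊕ ⟨42⟩ embeds as a sublattice of index 42 in the even unimodular lattice U ⊕ E_8 of signature (1,9); i.e., A_6 ⊕ A_2 ⊕ A_1 and a vector h of square 42 glue to U ⊕ E_8. -/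
/-!
The first six columns of the witness are the simple roots `e₃, …, e₈` of `E₈`, which span a copy
of `A₆`; the remaining four columns carry `A₂ ⊕ A₁` and the vector of square `42`. Up to a
permutation of rows and columns the witness is block triangular with an identity block, so its
determinant is, up to sign, the `4 × 4` minor on the remaining rows and columns.
-/

open Matrix

theorem Matrix.abs_det_submatrix_fromBlocks_zero_one {R n m p : Type*} [CommRing R] [LinearOrder R]
    [IsStrictOrderedRing R] [Fintype n] [DecidableEq n] [Fintype m] [DecidableEq m] [Fintype p]
    [DecidableEq p] (e₁ e₂ : n ≃ m ⊕ p) (B : Matrix m m R) (C : Matrix p m R) :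
    |((fromBlocks B 0 C (1 : Matrix p p R)).submatrix e₁ e₂).det| = |B.det| := by
  rw [abs_det_submatrix_equiv_equiv, det_fromBlocks_zero₁₂, det_one, mul_one]

def glueMinor : Matrix (Fin 4) (Fin 4) ℤ :=
  !![-3, 1, 0, -14;
     -1, 1, -1, -7;
     1, 2, 3, 7;
     -2, 3, 1, -7]

def glueEmbedding : Matrix (Fin 10) (Fin 10) ℤ :=
  !![0, 0, 0, 0, 0, 0, -3, 1, 0, -14;
     0, 0, 0, 0, 0, 0, -1, 1, -1, -7;
     0, 0, 0, 0, 0, 0, 1, 2, 3, 7;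
     0, 0, 0, 0, 0, 0, -2, 3, 1, -7;
     1, 0, 0, 0, 0, 0, -1, 4, 3, -1;
     0, 1, 0, 0, 0, 0, 0, 5, 5, 5;
     0, 0, 1, 0, 0, 0, 0, 4, 4, 4;
     0, 0, 0, 1, 0, 0, 0, 3, 3, 3;
     0, 0, 0, 0, 1, 0, 0, 2, 2, 2;
     0, 0, 0, 0, 0, 1, 0, 1, 1, 1]

theorem det_glueMinor : glueMinor.det = -42 := by
  simp [glueMinor, det_succ_row_zero, Fin.sum_univ_succ, Fin.succAbove]

theorem glueEmbedding_eq_submatrix_fromBlocks :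
    glueEmbedding =
      (fromBlocks glueMinor 0 (glueEmbedding.submatrix (Fin.natAdd 4) (Fin.natAdd 6)) 1).submatrix
        (finSumFinEquiv.symm : Fin (4 + 6) ≃ _)
        ((finSumFinEquiv.symm : Fin (6 + 4) ≃ _).trans (Equiv.sumComm _ _)) := by
  decide

theorem abs_det_glueEmbedding : |glueEmbedding.det| = 42 := by
  rw [glueEmbedding_eq_submatrix_fromBlocks, abs_det_submatrix_fromBlocks_zero_one, det_glueMinor]
  rfl

theorem glueEmbedding_gram :
    glueEmbeddingᵀ * gramUE8 * glueEmbedding =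
      blockSum (blockSum (blockSum (gramA 6) (gramA 2)) (gramA 1)) !![(42 : ℤ)] := by
  decide

/-- The lattice `A₆ ⊕ A₂ ⊕ A₁ ⊕ ⟨42⟩` embeds with index `42` into `U ⊕ E₈`: `A₆ ⊕ A₂ ⊕ A₁` and a vector of square `42` glue to `U ⊕ E₈`. -/
theorem glue_11 :
    ∃ S : Matrix (Fin 10) (Fin 10) ℤ,
      |S.det| = 42 ∧ S.transpose * gramUE8 * S = blockSum (blockSum (blockSum (gramA 6) (gramA 2)) (gramA 1)) !![(42 : ℤ)] :=
  ⟨glueEmbedding, abs_det_glueEmbedding, glueEmbedding_gram⟩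
end

section
/- There exists a 10×10 integer matrix S with |det S| = 30 such that Sᵀ · G(U⊕E_8) · S = G(A_5) ⊕ G(A_4) ⊕ ⟨30⟩. In other words, the lattice A_5 ⊕ A_4 ⊕ ⟨30⟩ embeds as a sublattice of index 30 in the even unimodular lattice U ⊕ E_8 of signature (1,9); i.e., A_5 ⊕ A_4 and a vector h of square 30 glue to U ⊕ E_8. -/
/-!
Once explicit images in `U ⊕ E₈` of the simple roots of `A₅`, `A₄` and of `h` are chosen, the
Gram identity is a finite computation. The index `|det S|` is read off a Hermite normal form
`H = L * S`: `L` is unimodular (it has an integral inverse) and `H` is upper triangular with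
diagonal product `30`.
-/

theorem Matrix.abs_det_mul_of_mul_eq_one {n : Type*} [Fintype n] [DecidableEq n]
    {L L' : Matrix n n ℤ} (hL : L * L' = 1) (S : Matrix n n ℤ) : |(L * S).det| = |S.det| := by
  have hL_det : |L.det| = 1 := Int.isUnit_iff_abs_eq.mp (Matrix.isUnit_det_of_right_inverse hL)
  rw [Matrix.det_mul, abs_mul, hL_det, one_mul]

namespace GlueA5A4

/-- Columns `0–4`: simple roots of `A₅`; columns `5–8`: simple roots of `A₄`; column `9`: `h`. -/
def embedding : Matrix (Fin 10) (Fin 10) ℤ :=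
  !![0, 0, 0, 0, 0, -1, 0, 1, -1, 6;
    0, 0, 0, 0, 0, 1, -1, 1, -1, 6;
    0, 0, 0, -1, 0, 0, -1, -1, -1, 2;
    0, 0, 0, 0, 0, 0, -1, -1, 0, 0;
    0, 0, 0, 0, -1, 0, -1, -2, -1, 1;
    0, 0, -1, 0, -1, 0, -2, -2, -2, 4;
    0, -1, 0, 0, -1, 0, -2, -1, -2, 5;
    -1, 0, 0, 0, -1, 0, -2, 0, -2, 6;
    0, 0, 0, 0, -1, 0, -2, 1, -2, 7;
    0, 0, 0, 0, 0, 0, -1, 1, -2, 6]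

def rowReduction : Matrix (Fin 10) (Fin 10) ℤ :=
  !![0, 0, 0, 0, 0, 0, 0, 1, 0, 0;
    0, 0, 0, 0, 0, 0, 1, 0, 0, 0;
    0, 0, 0, 0, 0, 1, 0, 0, 0, 0;
    0, 0, -1, 0, 0, 0, 0, 0, 0, 0;
    0, 0, 0, 0, 0, 0, 0, 0, 1, 0;
    -1, 0, 0, 0, 0, 0, 0, 0, 0, 0;
    0, 0, 0, 0, 0, 0, 0, 0, 0, 1;
    -1, -1, 0, 0, 0, 0, 0, 0, 0, 1;
    2, 2, 0, 0, 1, 0, 0, 0, -1, -1;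
    -6, -6, 0, -1, -2, 0, 0, 0, 2, 5]

def rowReductionInv : Matrix (Fin 10) (Fin 10) ℤ :=
  !![0, 0, 0, 0, 0, -1, 0, 0, 0, 0;
    0, 0, 0, 0, 0, 1, 1, -1, 0, 0;
    0, 0, 0, -1, 0, 0, 0, 0, 0, 0;
    0, 0, 0, 0, 0, 0, 1, 2, -2, -1;
    0, 0, 0, 0, 1, 0, -1, 2, 1, 0;
    0, 0, 1, 0, 0, 0, 0, 0, 0, 0;
    0, 1, 0, 0, 0, 0, 0, 0, 0, 0;
    1, 0, 0, 0, 0, 0, 0, 0, 0, 0;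
    0, 0, 0, 0, 1, 0, 0, 0, 0, 0;
    0, 0, 0, 0, 0, 0, 1, 0, 0, 0]

def hermiteForm : Matrix (Fin 10) (Fin 10) ℤ :=
  !![-1, 0, 0, 0, -1, 0, -2, 0, -2, 6;
    0, -1, 0, 0, -1, 0, -2, -1, -2, 5;
    0, 0, -1, 0, -1, 0, -2, -2, -2, 4;
    0, 0, 0, 1, 0, 0, 1, 1, 1, -2;
    0, 0, 0, 0, -1, 0, -2, 1, -2, 7;
    0, 0, 0, 0, 0, 1, 0, -1, 1, -6;
    0, 0, 0, 0, 0, 0, -1, 1, -2, 6;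
    0, 0, 0, 0, 0, 0, 0, -1, 0, -6;
    0, 0, 0, 0, 0, 0, 0, 0, -1, 12;
    0, 0, 0, 0, 0, 0, 0, 0, 0, -30]

theorem rowReduction_mul_rowReductionInv : rowReduction * rowReductionInv = 1 := by decide

theorem rowReduction_mul_embedding : rowReduction * embedding = hermiteForm := by decide

theorem hermiteForm_isUpperTriangular : hermiteForm.IsUpperTriangular := by
  -- `decide` finds no `Decidable` instance for entries `hermiteForm i j` under two binders
  have h : ∀ i j : Fin 10, j < i → hermiteForm.transpose j i = 0 := by decide
  exact fun i j => h i j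

theorem det_hermiteForm : hermiteForm.det = 30 := by
  rw [Matrix.det_of_isUpperTriangular hermiteForm_isUpperTriangular]
  decide

theorem abs_det_embedding : |embedding.det| = 30 := by
  rw [← Matrix.abs_det_mul_of_mul_eq_one rowReduction_mul_rowReductionInv,
    rowReduction_mul_embedding, det_hermiteForm]
  rfl

theorem embedding_transpose_mul_gramUE8_mul :
    embedding.transpose * gramUE8 * embedding =
      blockSum (blockSum (gramA 5) (gramA 4)) !![(30 : ℤ)] := by
  decide

end GlueA5A4

/-- The lattice `A₅ ⊕ A₄ ⊕ ⟨30⟩` embeds with index `30` into `U ⊕ E₈`: `A₅ ⊕ A₄` and a vector of square `30` glue to `U ⊕ E₈`. -/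
theorem glue_12 :
    ∃ S : Matrix (Fin 10) (Fin 10) ℤ,
      |S.det| = 30 ∧ S.transpose * gramUE8 * S = blockSum (blockSum (gramA 5) (gramA 4)) !![(30 : ℤ)] :=
  ⟨GlueA5A4.embedding, GlueA5A4.abs_det_embedding, GlueA5A4.embedding_transpose_mul_gramUE8_mul⟩
end

section
/- Let K = ℚ(t) be the field of rational functions in one variable over ℚ, and let E be the elliptic curve over K given by the Weierstrass equation y² = x³ + (t²+2)x² + x (the extremal rational elliptic surface X_{8211}). Then the point P = (−1, t) lies on E, the doubling of P in the group of K-points equals the 2-torsion point (0, 0), and P has exact order 4: 4·P = O while 2·P ≠ O, where O is the point at infinity. -/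
/-!
On `y² = x³ + a x² + x = x (x² + a x + 1)` the point `(0, 0)` is `2`-torsion. If `(-1, s)` lies
on the curve, i.e. `s² = a - 2`, the tangent there has slope `(4 - 2a) / 2s = -s`, and its third
intersection with the curve has abscissa `s² - a + 2 = 0`: the tangent passes through `(0, 0)`.
Hence `2 • (-1, s) = (0, 0)`, so `(-1, s)` has order `4` as soon as `2 s ≠ 0`.
-/

open WeierstrassCurve

/-- The extremal rational elliptic surface `X₈₂₁₁`, given as the elliptic curve
`y² = x³ + (t² + 2)x² + x` over `K = ℚ(t)`. -/
noncomputable def X8211 : WeierstrassCurve.Affine (RatFunc ℚ) :=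
  { a₁ := 0, a₂ := RatFunc.X ^ 2 + 2, a₃ := 0, a₄ := 1, a₆ := 0 }

namespace WeierstrassCurve.Affine

variable {F : Type*} [Field F]

def ofA₂ (a : F) : Affine F :=
  { a₁ := 0, a₂ := a, a₃ := 0, a₄ := 1, a₆ := 0 }

theorem ofA₂_nonsingular_zero_zero (a : F) : (ofA₂ a).Nonsingular 0 0 := by
  rw [nonsingular_iff, equation_iff]
  refine ⟨by simp [ofA₂], Or.inl ?_⟩
  simp [ofA₂]

theorem ofA₂_two_smul_zero_zero [DecidableEq F] (a : F) :
    2 • Point.some 0 0 (ofA₂_nonsingular_zero_zero a) = 0 := by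
  rw [two_smul]
  exact Point.add_self_of_Y_eq (by simp [negY, ofA₂])

variable {a s : F}

theorem ofA₂_Y_ne_negY_neg_one (h2 : (2 : F) ≠ 0) (hs : s ≠ 0) :
    s ≠ (ofA₂ a).negY (-1) s := by
  simp only [negY, ofA₂]
  intro h
  exact mul_ne_zero h2 hs (by linear_combination h)

theorem ofA₂_nonsingular_neg_one (h2 : (2 : F) ≠ 0) (hs : s ≠ 0) (ha : s ^ 2 = a - 2) :
    (ofA₂ a).Nonsingular (-1) s := by
  refine (nonsingular_iff _ _).mpr ⟨?_, Or.inr (ofA₂_Y_ne_negY_neg_one h2 hs)⟩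
  rw [equation_iff]
  simp only [ofA₂]
  linear_combination ha

theorem ofA₂_slope_neg_one [DecidableEq F] (h2 : (2 : F) ≠ 0) (hs : s ≠ 0)
    (ha : s ^ 2 = a - 2) : (ofA₂ a).slope (-1) (-1) s s = -s := by
  rw [slope_of_Y_ne rfl (ofA₂_Y_ne_negY_neg_one h2 hs), div_eq_iff]
  · simp only [negY, ofA₂]
    linear_combination 2 * ha
  · exact sub_ne_zero.mpr (ofA₂_Y_ne_negY_neg_one h2 hs)

theorem ofA₂_two_smul_neg_one [DecidableEq F] (h2 : (2 : F) ≠ 0) (hs : s ≠ 0)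
    (ha : s ^ 2 = a - 2) :
    2 • Point.some (-1) s (ofA₂_nonsingular_neg_one h2 hs ha) =
      Point.some 0 0 (ofA₂_nonsingular_zero_zero a) := by
  have hX : (ofA₂ a).addX (-1) (-1) ((ofA₂ a).slope (-1) (-1) s s) = 0 := by
    rw [ofA₂_slope_neg_one h2 hs ha]
    simp only [addX, ofA₂]
    linear_combination ha
  have hY : (ofA₂ a).addY (-1) (-1) s ((ofA₂ a).slope (-1) (-1) s s) = 0 := by
    rw [addY, negAddY, hX, ofA₂_slope_neg_one h2 hs ha]
    simp only [negY, ofA₂]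
    ring
  rw [two_smul, Point.add_self_of_Y_ne (ofA₂_Y_ne_negY_neg_one h2 hs)]
  simp only [hX, hY]

end WeierstrassCurve.Affine

open Classical in
/-- The point `P = (-1, t)` lies on `X₈₂₁₁`, its double is the `2`-torsion point
`(0, 0)`, and it has exact order `4` in the Mordell–Weil group. -/
theorem X8211_point_order_four :
    X8211.Equation (-1) RatFunc.X ∧
    ∃ (hP : X8211.Nonsingular (-1) RatFunc.X) (h0 : X8211.Nonsingular 0 0),
      2 • Affine.Point.some _ _ hP = Affine.Point.some _ _ h0 ∧
      4 • Affine.Point.some _ _ hP = 0 ∧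
      2 • Affine.Point.some _ _ hP ≠ 0 := by
  have ha : (RatFunc.X : RatFunc ℚ) ^ 2 = (RatFunc.X ^ 2 + 2) - 2 := by ring
  have hP := Affine.ofA₂_nonsingular_neg_one two_ne_zero RatFunc.X_ne_zero ha
  have h0 := Affine.ofA₂_nonsingular_zero_zero (RatFunc.X ^ 2 + 2 : RatFunc ℚ)
  have hdouble := Affine.ofA₂_two_smul_neg_one two_ne_zero RatFunc.X_ne_zero ha
  refine ⟨hP.1, hP, h0, hdouble, ?_, hdouble ▸ Affine.Point.some_ne_zero h0⟩
  calc 4 • Affine.Point.some _ _ hP = 2 • 2 • Affine.Point.some _ _ hP := by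
        rw [smul_smul]; rfl
    _ = 0 := by rw [hdouble, Affine.ofA₂_two_smul_zero_zero]
end
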